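/- arXiv:2604.12961 — 2 statements merged into one kernel-verified Lean document; each statement's English description precedes it below -/
import Mathlib

section
/- Let X be a square-integrable real random variable, x > 0, R ≥ 1 an integer, μ = E[X], p_{ix} = P(X > i·x), and suppose p_{Rx} > 0; write m = E[X·1{X > R·x}]/p_{Rx}. With X_r := X − x·Σ_{i=1}^{r} 1{X > i·x}, the variance reduction of the R-th marking step satisfies the exact identity Var(X_{R−1}) − Var(X_R) = x·p_{Rx}·( 2(m − μ) − 2x·Σ_{i=1}^{R−1}(1 − p_{ix}) − x·(1 − p_{Rx}) ). In particular Var(X_R) ≤ Var(X_{R−1}) if and only if 2(m − μ) − 2x·Σ_{i=1}^{R−1}(1 − p_{ix}) ≥ x·(1 − p_{Rx}). -/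
/-!
Passing from `X_{R-1}` to `X_R` subtracts `x • B` with `B = 1{X > Rx}`, so
`Var X_{R-1} - Var X_R = 2x Cov(X_{R-1}, B) - x² Var B`, and `Var B = p(1 - p)`.
On `{X > Rx}` every earlier indicator equals `1`, hence `X_{R-1} = X - (R-1)x` there and
`E[X_{R-1} B] = p(m - (R-1)x)`; with `E[X_{R-1}] = μ - x Σ pᵢ` this gives
`Cov(X_{R-1}, B) = p(m - μ - x Σ (1 - pᵢ))`. The equivalence follows because `x p > 0`.
-/

open MeasureTheory ProbabilityTheory Finset
open scoped ProbabilityTheory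

/-- The marked-corrected variable `X_r := X − x·Σ_{i=1}^{r} 1{X > i·x}`. -/
noncomputable def markedCorrected {Ω : Type*} (X : Ω → ℝ) (x : ℝ) (r : ℕ) : Ω → ℝ :=
  fun ω => X ω - x * ∑ i ∈ Finset.Icc 1 r, (if (i : ℝ) * x < X ω then (1 : ℝ) else 0)

section IndicatorMoments

variable {Ω : Type*} [MeasurableSpace Ω] {P : Measure Ω} [IsProbabilityMeasure P] {s : Set Ω}

lemma memLp_indicator_one (hs : MeasurableSet s) : MemLp (s.indicator (1 : Ω → ℝ)) 2 P :=
  (memLp_const 1).indicator hs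

lemma variance_indicator_one (hs : MeasurableSet s) :
    Var[s.indicator 1; P] = P.real s * (1 - P.real s) := by
  have hsq : s.indicator (1 : Ω → ℝ) ^ 2 = s.indicator 1 := by
    ext ω; by_cases hω : ω ∈ s <;> simp [hω]
  rw [variance_eq_sub (memLp_indicator_one hs), hsq, integral_indicator_one hs]
  ring

lemma covariance_indicator_one_right {Y : Ω → ℝ} (hY : MemLp Y 2 P) (hs : MeasurableSet s) :
    cov[Y, s.indicator 1; P] = ∫ ω in s, Y ω ∂P - P[Y] * P.real s := by
  have hmul : Y * s.indicator 1 = s.indicator Y := by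
    ext ω; by_cases hω : ω ∈ s <;> simp [hω]
  rw [covariance_eq_sub hY (memLp_indicator_one hs), hmul, integral_indicator hs,
    integral_indicator_one hs]

end IndicatorMoments

section MarkedCorrected

variable {Ω : Type*} {X : Ω → ℝ} {x : ℝ}

lemma markedCorrected_eq_sub_sum_indicator (r : ℕ) :
    markedCorrected X x r
      = fun ω ↦ X ω - x * ∑ i ∈ Icc 1 r, {ω | (i : ℝ) * x < X ω}.indicator 1 ω := by
  ext ω
  simp [markedCorrected, Set.indicator_apply]

lemma markedCorrected_succ (r : ℕ) :
    markedCorrected X x (r + 1)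
      = markedCorrected X x r - x • {ω | ((r + 1 : ℕ) : ℝ) * x < X ω}.indicator 1 := by
  ext ω
  simp only [markedCorrected_eq_sub_sum_indicator, sum_Icc_succ_top (Nat.le_add_left 1 r),
    Pi.sub_apply, Pi.smul_apply, smul_eq_mul]
  ring

lemma markedCorrected_apply_of_lt (hx : 0 ≤ x) {r : ℕ} {ω : Ω} (h : (r : ℝ) * x < X ω) :
    markedCorrected X x r ω = X ω - x * r := by
  have hall : ∀ i ∈ Icc 1 r, (if (i : ℝ) * x < X ω then (1 : ℝ) else 0) = 1 := by
    intro i hi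
    have hir : (i : ℝ) ≤ r := by exact_mod_cast (mem_Icc.1 hi).2
    exact if_pos ((mul_le_mul_of_nonneg_right hir hx).trans_lt h)
  simp [markedCorrected, sum_congr rfl hall]

variable [MeasurableSpace Ω] {P : Measure Ω} [IsProbabilityMeasure P]

lemma memLp_markedCorrected (hm : Measurable X) (hL : MemLp X 2 P) (r : ℕ) :
    MemLp (markedCorrected X x r) 2 P := by
  rw [markedCorrected_eq_sub_sum_indicator]
  exact hL.sub ((memLp_finsetSum _ fun i _ ↦
    memLp_indicator_one (measurableSet_lt measurable_const hm)).const_mul x)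

lemma integral_markedCorrected (hm : Measurable X) (hL : MemLp X 2 P) (r : ℕ) :
    P[markedCorrected X x r]
      = P[X] - x * ∑ i ∈ Icc 1 r, P.real {ω | (i : ℝ) * x < X ω} := by
  have hint : ∀ i ∈ Icc 1 r,
      Integrable ({ω | (i : ℝ) * x < X ω}.indicator (1 : Ω → ℝ)) P :=
    fun i _ ↦ (integrable_const 1).indicator (measurableSet_lt measurable_const hm)
  rw [markedCorrected_eq_sub_sum_indicator, integral_sub (hL.integrable one_le_two)
    ((integrable_finsetSum _ hint).const_mul x), integral_const_mul, integral_finsetSum _ hint]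
  simp only [integral_indicator_one (measurableSet_lt measurable_const hm)]

lemma covariance_markedCorrected_indicator (hx : 0 ≤ x) (hm : Measurable X) (hL : MemLp X 2 P)
    {r : ℕ} {t : ℝ} (ht : r * x ≤ t) :
    cov[markedCorrected X x r, {ω | t < X ω}.indicator 1; P]
      = ∫ ω in {ω | t < X ω}, X ω ∂P - P[X] * P.real {ω | t < X ω}
        - x * P.real {ω | t < X ω}
          * ∑ i ∈ Icc 1 r, (1 - P.real {ω | (i : ℝ) * x < X ω}) := by
  have hs : MeasurableSet {ω | t < X ω} := measurableSet_lt measurable_const hm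
  have hset : ∫ ω in {ω | t < X ω}, markedCorrected X x r ω ∂P
      = ∫ ω in {ω | t < X ω}, X ω ∂P - P.real {ω | t < X ω} * (x * r) := by
    rw [setIntegral_congr_fun hs fun ω hω ↦ markedCorrected_apply_of_lt hx (ht.trans_lt hω),
      integral_sub (hL.integrable one_le_two).integrableOn (integrable_const _),
      setIntegral_const, smul_eq_mul]
  rw [covariance_indicator_one_right (memLp_markedCorrected hm hL r) hs, hset,
    integral_markedCorrected hm hL, sum_sub_distrib, sum_const, Nat.card_Icc]
  simp only [add_tsub_cancel_right, nsmul_eq_mul, mul_one]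
  ring

lemma variance_markedCorrected_sub_variance_succ (hx : 0 ≤ x) (hm : Measurable X)
    (hL : MemLp X 2 P) (r : ℕ) :
    Var[markedCorrected X x r; P] - Var[markedCorrected X x (r + 1); P]
      = 2 * x * (∫ ω in {ω | ((r + 1 : ℕ) : ℝ) * x < X ω}, X ω ∂P
          - P[X] * P.real {ω | ((r + 1 : ℕ) : ℝ) * x < X ω}
          - x * P.real {ω | ((r + 1 : ℕ) : ℝ) * x < X ω}
            * ∑ i ∈ Icc 1 r, (1 - P.real {ω | (i : ℝ) * x < X ω}))
        - x ^ 2 * (P.real {ω | ((r + 1 : ℕ) : ℝ) * x < X ω}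
          * (1 - P.real {ω | ((r + 1 : ℕ) : ℝ) * x < X ω})) := by
  have hs : MeasurableSet {ω | ((r + 1 : ℕ) : ℝ) * x < X ω} :=
    measurableSet_lt measurable_const hm
  rw [markedCorrected_succ, variance_sub (memLp_markedCorrected hm hL r)
    ((memLp_indicator_one hs).const_smul x), covariance_smul_right, variance_smul,
    variance_indicator_one hs,
    covariance_markedCorrected_indicator hx hm hL (by gcongr; exact_mod_cast r.le_succ)]
  ring

end MarkedCorrected

/-- **Exact variance-reduction identity of the `R`-th marking step.**
With `μ = E[X]`, `p_{ix} = P(X > i·x)`, `p_{Rx} > 0` and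
`m = E[X·1{X > Rx}]/p_{Rx}`:
`Var(X_{R−1}) − Var(X_R)
  = x·p_{Rx}·(2(m − μ) − 2x·Σ_{i=1}^{R−1}(1 − p_{ix}) − x·(1 − p_{Rx}))`,
and `Var(X_R) ≤ Var(X_{R−1})` iff
`2(m − μ) − 2x·Σ_{i=1}^{R−1}(1 − p_{ix}) ≥ x·(1 − p_{Rx})`. -/
theorem variance_reduction_identity_and_iff
    {Ω : Type*} [MeasureSpace Ω] [IsProbabilityMeasure (ℙ : Measure Ω)]
    (X : Ω → ℝ) (hm : Measurable X) (hL : MemLp X 2 ℙ)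
    (x : ℝ) (hx : 0 < x) (R : ℕ) (hR : 1 ≤ R)
    (μ m pRx : ℝ)
    (hμ : μ = 𝔼[X])
    (hpRx : pRx = (ℙ {ω | (R : ℝ) * x < X ω}).toReal)
    (hpRxpos : 0 < pRx)
    (hmdef : m = 𝔼[fun ω => X ω * (if (R : ℝ) * x < X ω then (1 : ℝ) else 0)] / pRx) :
    Var[markedCorrected X x (R - 1)] - Var[markedCorrected X x R]
      = x * pRx
          * (2 * (m - μ)
             - 2 * x * (∑ i ∈ Finset.Icc 1 (R - 1),
                 (1 - (ℙ {ω | (i : ℝ) * x < X ω}).toReal))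
             - x * (1 - pRx))
    ∧ (Var[markedCorrected X x R] ≤ Var[markedCorrected X x (R - 1)]
        ↔ 2 * (m - μ)
            - 2 * x * (∑ i ∈ Finset.Icc 1 (R - 1),
                (1 - (ℙ {ω | (i : ℝ) * x < X ω}).toReal))
          ≥ x * (1 - pRx)) := by
  obtain ⟨r, rfl⟩ : ∃ r, R = r + 1 := ⟨R - 1, (Nat.succ_pred_eq_of_pos hR).symm⟩
  simp only [Nat.add_sub_cancel, ← measureReal_def] at hpRx ⊢
  have hs : MeasurableSet {ω | ((r + 1 : ℕ) : ℝ) * x < X ω} :=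
    measurableSet_lt measurable_const hm
  have hXs : ∫ ω in {ω | ((r + 1 : ℕ) : ℝ) * x < X ω}, X ω = m * pRx := by
    rw [hmdef, div_mul_cancel₀ _ hpRxpos.ne', ← integral_indicator hs]
    congr 1 with ω
    simp [Set.indicator_apply]
  have hidentity : Var[markedCorrected X x r] - Var[markedCorrected X x (r + 1)]
      = x * pRx * (2 * (m - μ)
        - 2 * x * ∑ i ∈ Icc 1 r, (1 - (ℙ : Measure Ω).real {ω | (i : ℝ) * x < X ω})
        - x * (1 - pRx)) := by
    rw [variance_markedCorrected_sub_variance_succ hx.le hm hL r, hXs, ← hpRx, ← hμ]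
    ring
  refine ⟨hidentity, ?_⟩
  rw [← sub_nonneg, hidentity, mul_nonneg_iff_of_pos_left (mul_pos hx hpRxpos), ge_iff_le,
    sub_nonneg]
end

section
/- (Result R2: marking at a single hop, made precise.) Let A_1, …, A_s, B_1, …, B_s be mutually independent square-integrable real random variables with Δ_i := E[A_i] − E[B_{s+1−i}], and let A'_1, …, A'_s, B'_1, …, B'_s be mutually independent square-integrable real random variables that agree with the unprimed ones in mean and variance at every hop except at a single hop g, where correction is applied. Assume at hop g: Var(A'_g) ≤ Var(A_g), Var(B'_{s+1−g}) ≤ Var(B_{s+1−g}), the corrected paired mean difference Δ'_g := E[A'_g] − E[B'_{s+1−g}] has the same sign as Δ_g with |Δ'_g| ≤ |Δ_g|, and the coherence condition Δ_g · Σ_{k ≠ g} Δ_k ≥ 0 holds. Then the total mean-squared offset estimation error does not increase: E[ ( Σ_i A'_i − Σ_j B'_j )² ] ≤ E[ ( Σ_i A_i − Σ_j B_j )² ]. -/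
/-!
Since the hops are independent, the mean-squared error is the total variance plus the squared
total mean, `E[(ΣA - ΣB)²] = Σ Var A_i + Σ Var B_j + (Σ Δ_i)²`. Correcting hop `g` does not
raise the variance part, and it changes the mean part from `(Δ_g + S)²` to `(Δ'_g + S)²`
with `S = Σ_{k ≠ g} Δ_k`; coherence `Δ_g S ≥ 0` together with `|Δ'_g| ≤ |Δ_g|` makes this a
decrease.
-/

open MeasureTheory ProbabilityTheory Finset
open scoped ProbabilityTheory

lemma sq_add_le_sq_add_of_abs_le {d d' S : ℝ} (hAbs : |d'| ≤ |d|) (hCoh : 0 ≤ d * S) :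
    (d' + S) ^ 2 ≤ (d + S) ^ 2 := by
  have hsq : d' ^ 2 ≤ d ^ 2 := sq_le_sq.mpr hAbs
  have hcross : d' * S ≤ d * S :=
    calc d' * S ≤ |d'| * |S| := (le_abs_self _).trans (abs_mul _ _).le
      _ ≤ |d| * |S| := mul_le_mul_of_nonneg_right hAbs (abs_nonneg S)
      _ = d * S := by rw [← abs_mul, abs_of_nonneg hCoh]
  linear_combination hsq + 2 * hcross

lemma sq_sum_le_sq_sum_of_eq_off {ι : Type*} [Fintype ι] [DecidableEq ι] {Δ Δ' : ι → ℝ}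
    (g : ι) (hne : ∀ k, k ≠ g → Δ' k = Δ k) (hAbs : |Δ' g| ≤ |Δ g|)
    (hCoh : 0 ≤ Δ g * ∑ k ∈ univ.erase g, Δ k) :
    (∑ k, Δ' k) ^ 2 ≤ (∑ k, Δ k) ^ 2 := by
  rw [← add_sum_erase _ _ (mem_univ g), ← add_sum_erase _ _ (mem_univ g),
    sum_congr rfl fun k hk => hne k (ne_of_mem_erase hk)]
  exact sq_add_le_sq_add_of_abs_le hAbs hCoh

lemma sum_le_sum_of_le_of_eq_off {ι : Type*} [Fintype ι] {f f' : ι → ℝ} (g : ι)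
    (hg : f' g ≤ f g) (hne : ∀ i, i ≠ g → f' i = f i) : ∑ i, f' i ≤ ∑ i, f i :=
  sum_le_sum fun i _ => by
    rcases eq_or_ne i g with rfl | h
    exacts [hg, (hne i h).le]

lemma ProbabilityTheory.iIndepFun.sumElim_neg {Ω ι κ : Type*} [MeasurableSpace Ω]
    {μ : Measure Ω} {A : ι → Ω → ℝ} {B : κ → Ω → ℝ}
    (hind : iIndepFun (Sum.elim A B) μ) : iIndepFun (Sum.elim A fun j => -B j) μ := by
  have h := hind.comp (Sum.elim (fun _ => id) fun _ => Neg.neg)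
    (by rintro (i | j); exacts [measurable_id, measurable_neg])
  convert h using 2 with k
  cases k <;> rfl

section SecondMoment

variable {Ω : Type*} [MeasurableSpace Ω] {μ : Measure Ω} [IsProbabilityMeasure μ]

lemma integral_sq_sum_of_iIndepFun {ι : Type*} [Fintype ι] {X : ι → Ω → ℝ}
    (hL : ∀ i, MemLp (X i) 2 μ) (hind : iIndepFun X μ) :
    μ[(∑ i, X i) ^ 2] = ∑ i, Var[X i; μ] + (∑ i, μ[X i]) ^ 2 := by
  have hvar : Var[∑ i, X i; μ] = ∑ i, Var[X i; μ] :=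
    IndepFun.variance_sum (fun i _ => hL i) fun i _ j _ hij => hind.indepFun hij
  have hmean : μ[∑ i, X i] = ∑ i, μ[X i] := by
    simpa only [Finset.sum_apply] using
      integral_finsetSum univ fun i _ => (hL i).integrable one_le_two
  rw [← hvar, ← hmean, variance_eq_sub (memLp_finsetSum' _ fun i _ => hL i)]
  ring

lemma integral_sq_sum_sub_sum {ι κ : Type*} [Fintype ι] [Fintype κ]
    {A : ι → Ω → ℝ} {B : κ → Ω → ℝ} (hLA : ∀ i, MemLp (A i) 2 μ) (hLB : ∀ j, MemLp (B j) 2 μ)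
    (hind : iIndepFun (Sum.elim A B) μ) :
    μ[fun ω => ((∑ i, A i ω) - ∑ j, B j ω) ^ 2]
      = ∑ i, Var[A i; μ] + ∑ j, Var[B j; μ] + ((∑ i, μ[A i]) - ∑ j, μ[B j]) ^ 2 := by
  set X : ι ⊕ κ → Ω → ℝ := Sum.elim A fun j => -B j
  have hL : ∀ k, MemLp (X k) 2 μ := by
    rintro (i | j)
    exacts [hLA i, (hLB j).neg]
  have hX : (fun ω => ((∑ i, A i ω) - ∑ j, B j ω) ^ 2) = (∑ k, X k) ^ 2 := by
    ext ω
    simp [X, Fintype.sum_sum_type, sub_eq_add_neg]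
  rw [hX, integral_sq_sum_of_iIndepFun hL hind.sumElim_neg]
  simp [X, Fintype.sum_sum_type, variance_neg, integral_neg, sub_eq_add_neg]

end SecondMoment

lemma sum_sub_sum_eq_sum_sub_rev {s : ℕ} (a b : Fin s → ℝ) :
    (∑ i, a i) - ∑ j, b j = ∑ i, (a i - b i.rev) := by
  rw [sum_sub_distrib, ← Equiv.sum_comp Fin.revPerm b]
  rfl

theorem single_hop_marking_mse_improvement_R2_general
    {Ω : Type*} [MeasureSpace Ω] [IsProbabilityMeasure (ℙ : Measure Ω)]
    (s : ℕ) (A B A' B' : Fin s → Ω → ℝ)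
    (hLA : ∀ i, MemLp (A i) 2 ℙ) (hLB : ∀ i, MemLp (B i) 2 ℙ)
    (hLA' : ∀ i, MemLp (A' i) 2 ℙ) (hLB' : ∀ i, MemLp (B' i) 2 ℙ)
    (hindep : iIndepFun
      (Sum.elim A B) ℙ)
    (hindep' : iIndepFun
      (Sum.elim A' B') ℙ)
    (Δ Δ' : Fin s → ℝ)
    (hΔ : ∀ i, Δ i = 𝔼[A i] - 𝔼[B i.rev])
    (hΔ' : ∀ i, Δ' i = 𝔼[A' i] - 𝔼[B' i.rev])
    (g : Fin s)
    -- agreement in mean and variance at every hop other than `g`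
    (hAgreeMeanA : ∀ i, i ≠ g → 𝔼[A' i] = 𝔼[A i])
    (hAgreeVarA : ∀ i, i ≠ g → Var[A' i] = Var[A i])
    (hAgreeMeanB : ∀ i, i ≠ g → 𝔼[B' i.rev] = 𝔼[B i.rev])
    (hAgreeVarB : ∀ i, i ≠ g → Var[B' i.rev] = Var[B i.rev])
    -- conditions at the corrected hop `g`
    (hVarAg : Var[A' g] ≤ Var[A g])
    (hVarBg : Var[B' g.rev] ≤ Var[B g.rev])
    (hAbs : |Δ' g| ≤ |Δ g|)
    -- coherence condition
    (hCoh : 0 ≤ Δ g * ∑ k ∈ Finset.univ.erase g, Δ k) :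
    𝔼[fun ω => ((∑ i, A' i ω) - (∑ j, B' j ω)) ^ 2]
      ≤ 𝔼[fun ω => ((∑ i, A i ω) - (∑ j, B j ω)) ^ 2] := by
  rw [integral_sq_sum_sub_sum hLA' hLB' hindep', integral_sq_sum_sub_sum hLA hLB hindep,
    sum_sub_sum_eq_sum_sub_rev, sum_sub_sum_eq_sum_sub_rev,
    ← Equiv.sum_comp Fin.revPerm fun j => Var[B' j],
    ← Equiv.sum_comp Fin.revPerm fun j => Var[B j]]
  have hVarA := sum_le_sum_of_le_of_eq_off g hVarAg hAgreeVarA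
  have hVarB := sum_le_sum_of_le_of_eq_off g hVarBg hAgreeVarB
  have hMean := sq_sum_le_sq_sum_of_eq_off (Δ := Δ) (Δ' := Δ') g
    (fun k hk => by rw [hΔ', hΔ, hAgreeMeanA k hk, hAgreeMeanB k hk]) hAbs hCoh
  simp only [← hΔ, ← hΔ'] at hMean ⊢
  exact add_le_add (add_le_add hVarA hVarB) hMean

/-- **Result R2: marking at a single hop.**
If the corrected families agree with the original ones in mean and variance
at every hop except hop `g`, where the variances do not increase, the paired
mean difference keeps its sign and does not increase in magnitude, and the
coherence condition `Δ_g · Σ_{k ≠ g} Δ_k ≥ 0` holds, then the total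
mean-squared offset estimation error does not increase. -/
theorem single_hop_marking_mse_improvement_R2
    {Ω : Type*} [MeasureSpace Ω] [IsProbabilityMeasure (ℙ : Measure Ω)]
    (s : ℕ) (A B A' B' : Fin s → Ω → ℝ)
    (hmA : ∀ i, Measurable (A i)) (hmB : ∀ i, Measurable (B i))
    (hmA' : ∀ i, Measurable (A' i)) (hmB' : ∀ i, Measurable (B' i))
    (hLA : ∀ i, MemLp (A i) 2 ℙ) (hLB : ∀ i, MemLp (B i) 2 ℙ)
    (hLA' : ∀ i, MemLp (A' i) 2 ℙ) (hLB' : ∀ i, MemLp (B' i) 2 ℙ)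
    (hindep : iIndepFun
      (Sum.elim A B) ℙ)
    (hindep' : iIndepFun
      (Sum.elim A' B') ℙ)
    (Δ Δ' : Fin s → ℝ)
    (hΔ : ∀ i, Δ i = 𝔼[A i] - 𝔼[B i.rev])
    (hΔ' : ∀ i, Δ' i = 𝔼[A' i] - 𝔼[B' i.rev])
    (g : Fin s)
    -- agreement in mean and variance at every hop other than `g`
    (hAgreeMeanA : ∀ i, i ≠ g → 𝔼[A' i] = 𝔼[A i])
    (hAgreeVarA : ∀ i, i ≠ g → Var[A' i] = Var[A i])
    (hAgreeMeanB : ∀ i, i ≠ g → 𝔼[B' i.rev] = 𝔼[B i.rev])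
    (hAgreeVarB : ∀ i, i ≠ g → Var[B' i.rev] = Var[B i.rev])
    -- conditions at the corrected hop `g`
    (hVarAg : Var[A' g] ≤ Var[A g])
    (hVarBg : Var[B' g.rev] ≤ Var[B g.rev])
    (hSign : 0 ≤ Δ' g * Δ g)
    (hAbs : |Δ' g| ≤ |Δ g|)
    -- coherence condition
    (hCoh : 0 ≤ Δ g * ∑ k ∈ Finset.univ.erase g, Δ k) :
    𝔼[fun ω => ((∑ i, A' i ω) - (∑ j, B' j ω)) ^ 2]
      ≤ 𝔼[fun ω => ((∑ i, A i ω) - (∑ j, B j ω)) ^ 2] :=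
  single_hop_marking_mse_improvement_R2_general s A B A' B' hLA hLB hLA' hLB' hindep hindep' Δ Δ' hΔ
    hΔ' g hAgreeMeanA hAgreeVarA hAgreeMeanB hAgreeVarB hVarAg hVarBg hAbs hCoh
end
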